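/- Let X, Z be finite sets of cardinality n with symmetric non-negative functions, f : X → Z a bijection, and M_f the induced block function. Then for every a ∈ ℝ≥0, the sum over all b ∈ ℝ≥0 of M_f(a,b) equals m^X(a), the multiplicity of death value a in the barcode of X (i.e., the number of generators of H_0(VR_0(X)) in the triplet merge tree that die at value a). Symmetrically, for every b ∈ ℝ≥0, the sum over all a of M_f(a,b) equals m^Z(b). -/

import Mathlib

open scoped NNReal
open Module

/-- 1-skeleton of the Vietoris–Rips filtration of `(Z, d)`: edgeless at `r = 0`;
for `r > 0` it has an edge between distinct points at distance at most `r`.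
(The adjacency is symmetrized; for symmetric `d` this agrees with the usual definition.) -/
def VR {Z : Type*} (d : Z → Z → ℝ≥0) (r : ℝ≥0) : SimpleGraph Z where
  Adj z z' := z ≠ z' ∧ 0 < r ∧ d z z' ≤ r ∧ d z' z ≤ r
  symm := by constructor; intro z z' h; exact ⟨h.1.symm, h.2.1, h.2.2.2, h.2.2.1⟩
  loopless := by constructor; intro z h; exact h.1 rfl

/-- "Closed" Vietoris–Rips graph, used for `ker⁺`: at `r = 0` it has the edges between
distinct points at distance `0`; for `r > 0` it coincides with `VR d r`. -/
def VRc {Z : Type*} (d : Z → Z → ℝ≥0) (r : ℝ≥0) : SimpleGraph Z where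
  Adj z z' := z ≠ z' ∧ d z z' ≤ r ∧ d z' z ≤ r
  symm := by constructor; intro z z' h; exact ⟨h.1.symm, h.2.2, h.2.1⟩
  loopless := by constructor; intro z h; exact h.1 rfl

lemma VR_mono {Z : Type*} (d : Z → Z → ℝ≥0) {r s : ℝ≥0} (hrs : r ≤ s) :
    VR d r ≤ VR d s := by
  intro a b hab
  exact ⟨hab.1, hab.2.1.trans_le hrs, hab.2.2.1.trans hrs, hab.2.2.2.trans hrs⟩

/-- The structure map `ρ` from `H₀` of the edgeless graph on `Z` (the free `𝔽₂`-vector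
space on `Z`, identified with `Z → 𝔽₂`) to `H₀(G)` (the free `𝔽₂`-vector space on the
connected components of `G`), summing the coefficients over each connected component. -/
noncomputable def rho {Z : Type*} [Fintype Z] (G : SimpleGraph Z) :
    (Z → ZMod 2) →ₗ[ZMod 2] (G.ConnectedComponent → ZMod 2) where
  toFun v c :=
    ∑ z ∈ @Finset.filter _ (fun z => G.connectedComponentMk z = c)
      (Classical.decPred _) Finset.univ, v z
  map_add' := by
    intro v w; funext c; simp [Finset.sum_add_distrib]
  map_smul' := by
    intro m v; funext c; simp [Finset.mul_sum]

/-- `ker (ρ_{0r})` for the (open) Vietoris–Rips graph `VR d r`. -/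
noncomputable def kerVR {Z : Type*} [Fintype Z] (d : Z → Z → ℝ≥0) (r : ℝ≥0) :
    Submodule (ZMod 2) (Z → ZMod 2) := LinearMap.ker (rho (VR d r))

/-- `ker⁺_b`: kernel of `ρ_{0b}`.  For `b > 0` this is `ker (ρ_{0b})` of `VR d b`;
at `b = 0` it is the span of the classes `[z_j] + [z_i]` with `d z_i z_j = 0`. -/
noncomputable def kerP {Z : Type*} [Fintype Z] (d : Z → Z → ℝ≥0) (b : ℝ≥0) :
    Submodule (ZMod 2) (Z → ZMod 2) := LinearMap.ker (rho (VRc d b))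

/-- `ker⁻_b = ⋃_{0 ≤ r < b} ker (ρ_{0r})`, as a submodule (the union is increasing). -/
noncomputable def kerM {Z : Type*} [Fintype Z] (d : Z → Z → ℝ≥0) (b : ℝ≥0) :
    Submodule (ZMod 2) (Z → ZMod 2) := ⨆ r : {r : ℝ≥0 // r < b}, kerVR d (r : ℝ≥0)

/-- Multiplicity of the death value `a` in the barcode: `m(a) = dim ker⁺_a − dim ker⁻_a`. -/
noncomputable def mult {Z : Type*} [Fintype Z] (d : Z → Z → ℝ≥0) (a : ℝ≥0) : ℕ :=
  finrank (ZMod 2) (kerP d a) - finrank (ZMod 2) (kerM d a)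

/-- The induced block function `M_f(a,b)` for the identity relabelling bijection
`f : (Fin n, dX) → (Fin n, dZ)`, `x_i ↦ z_i` (so that `f₀ = id` on `H₀(VR₀)`):
`dim ((f₀ ker⁺_a(X) ∩ ker⁺_b(Z)) / (f₀ ker⁻_a(X) ∩ ker⁺_b(Z) + f₀ ker⁺_a(X) ∩ ker⁻_b(Z)))`. -/
noncomputable def blockFn {Z : Type*} [Fintype Z] (dX dZ : Z → Z → ℝ≥0) (a b : ℝ≥0) : ℕ :=
  finrank (ZMod 2)
    ((↥(kerP dX a ⊓ kerP dZ b)) ⧸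
      ((kerM dX a ⊓ kerP dZ b ⊔ kerP dX a ⊓ kerM dZ b).comap
        (kerP dX a ⊓ kerP dZ b).subtype))

/-!
Fix `a` and write `A = ker⁺_a(X)`, `B = ker⁻_a(X) ≤ A` and `W_b = ker⁺_b(Z)`. Counting dimensions
gives `M_f(a,b) = dim (A ⊓ W_b ⊔ B) - dim (A ⊓ ker⁻_b(Z) ⊔ B)`. Now `W_b` is a step function of `b`
that can only jump at `0` and at the distances of `Z`, and `ker⁻_b(Z)` is its value at the preceding
jump (it is `0` at `b = 0`). So the sum over `b` telescopes to `dim (A ⊓ W_b ⊔ B) - dim B` for `b`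
beyond all distances, where `W_b` is the whole kernel of the augmentation and contains `A`; this is
`dim A - dim B = m^X(a)`. The other marginal is the same statement with `X` and `Z` exchanged.
-/

theorem Finset.sum_add_eq_of_telescoping {α M : Type*} [LinearOrder α] [AddCommMonoid M]
    {h f : α → M} {c : M} (s : Finset α)
    (hmin : ∀ t ∈ s, (∀ u ∈ s, t ≤ u) → h t + c = f t)
    (hstep : ∀ t ∈ s, ∀ u ∈ s, u < t → (∀ v ∈ s, v < t → v ≤ u) → h t + f u = f t)
    (hs : s.Nonempty) :
    ∑ t ∈ s, h t + c = f (s.max' hs) := by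
  classical
  induction s using Finset.induction_on_max with
  | empty => exact absurd hs Finset.not_nonempty_empty
  | insert a s hlt ih =>
    have ha : a ∉ s := fun has => lt_irrefl a (hlt a has)
    rcases s.eq_empty_or_nonempty with rfl | hne
    · simpa using hmin a (by simp) (by simp)
    have hmax : (insert a s).max' hs = a :=
      le_antisymm (Finset.max'_le _ _ _ fun x hx => by
        rcases Finset.mem_insert.mp hx with rfl | hx
        exacts [le_rfl, (hlt x hx).le]) (Finset.le_max' _ _ (by simp))
    have ih' := ih
      (fun t ht htmin => hmin t (by simp [ht]) fun u hu => by
        rcases Finset.mem_insert.mp hu with rfl | hu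
        exacts [(hlt t ht).le, htmin u hu])
      (fun t ht u hu hut hpred => hstep t (by simp [ht]) u (by simp [hu]) hut fun v hv hvt => by
        rcases Finset.mem_insert.mp hv with rfl | hv
        exacts [absurd (hvt.trans (hlt t ht)) (lt_irrefl v), hpred v hv hvt])
      hne
    have hlast : h a + f (s.max' hne) = f a :=
      hstep a (by simp) _ (by simp [Finset.max'_mem]) (hlt _ (s.max'_mem hne)) fun v hv hva => by
        rcases Finset.mem_insert.mp hv with rfl | hv
        exacts [absurd hva (lt_irrefl v), s.le_max' v hv]
    rw [Finset.sum_insert ha, add_assoc, ih', hlast, hmax]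

theorem Submodule.finrank_quotient_inf_sup_add_finrank {K V : Type*} [Field K] [AddCommGroup V]
    [Module K V] [FiniteDimensional K V] {A B W W' : Submodule K V} (hBA : B ≤ A) (hW : W' ≤ W) :
    finrank K ((↥(A ⊓ W)) ⧸ ((B ⊓ W ⊔ A ⊓ W').comap (A ⊓ W).subtype))
      + finrank K ↥(A ⊓ W' ⊔ B) = finrank K ↥(A ⊓ W ⊔ B) := by
  have hle : B ⊓ W ⊔ A ⊓ W' ≤ A ⊓ W := sup_le (inf_le_inf_right W hBA) (inf_le_inf_left A hW)
  have hquot := Submodule.finrank_quotient_add_finrank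
    ((B ⊓ W ⊔ A ⊓ W').comap (A ⊓ W).subtype)
  rw [(Submodule.comapSubtypeEquivOfLe hle).finrank_eq] at hquot
  have hW_B := Submodule.finrank_sup_add_finrank_inf_eq (A ⊓ W) B
  have hW'_B := Submodule.finrank_sup_add_finrank_inf_eq (A ⊓ W') B
  have hmid := Submodule.finrank_sup_add_finrank_inf_eq (B ⊓ W) (A ⊓ W')
  have e1 : A ⊓ W ⊓ B = B ⊓ W := by
    ext x; simp only [Submodule.mem_inf]; have := @hBA x; tauto
  have e2 : A ⊓ W' ⊓ B = B ⊓ W' := by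
    ext x; simp only [Submodule.mem_inf]; have := @hBA x; tauto
  have e3 : B ⊓ W ⊓ (A ⊓ W') = B ⊓ W' := by
    ext x; simp only [Submodule.mem_inf]; have := @hBA x; have := @hW x; tauto
  rw [e1] at hW_B
  rw [e2] at hW'_B
  rw [e3] at hmid
  omega

section VietorisRips

variable {Z : Type*}

open Classical in
lemma rho_apply [Fintype Z] (G : SimpleGraph Z) (v : Z → ZMod 2)
    (c : G.ConnectedComponent) :
    rho G v c = ∑ z with G.connectedComponentMk z = c, v z := by
  simp only [rho, LinearMap.coe_mk, AddHom.coe_mk]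

lemma ker_rho_mono [Fintype Z] {G H : SimpleGraph Z} (h : G ≤ H) :
    LinearMap.ker (rho G) ≤ LinearMap.ker (rho H) := by
  classical
  intro v hv
  rw [LinearMap.mem_ker] at hv ⊢
  ext c
  rw [Pi.zero_apply, rho_apply, ← Finset.sum_fiberwise_of_maps_to
    (g := G.connectedComponentMk) (t := {c' | c'.map (SimpleGraph.Hom.ofLE h) = c})
    (fun z hz => by simpa using hz)]
  refine Finset.sum_eq_zero fun c' hc' => ?_
  refine Eq.trans ?_ (congrFun hv c')
  rw [rho_apply, Finset.filter_filter]
  refine Finset.sum_congr (Finset.filter_congr fun z _ => ?_) fun _ _ => rfl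
  simp only [Finset.mem_filter, Finset.mem_univ, true_and] at hc'
  exact ⟨And.right, fun hz => ⟨hc' ▸ hz ▸ rfl, hz⟩⟩

variable (d : Z → Z → ℝ≥0)

lemma VR_le_VRc {r s : ℝ≥0} (hrs : r ≤ s) : VR d r ≤ VRc d s :=
  fun _ _ h => ⟨h.1, h.2.2.1.trans hrs, h.2.2.2.trans hrs⟩

lemma VR_eq_VRc {r : ℝ≥0} (hr : 0 < r) : VR d r = VRc d r := by
  ext
  exact ⟨fun h => ⟨h.1, h.2.2.1, h.2.2.2⟩, fun h => ⟨h.1, hr, h.2.1, h.2.2⟩⟩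

lemma VRc_eq_of_gap {c s : ℝ≥0} (hcs : c ≤ s) (hgap : ∀ i j, d i j ≤ s → d i j ≤ c) :
    VRc d c = VRc d s := by
  ext
  exact ⟨fun h => ⟨h.1, h.2.1.trans hcs, h.2.2.trans hcs⟩,
    fun h => ⟨h.1, hgap _ _ h.2.1, hgap _ _ h.2.2⟩⟩

lemma VRc_eq_top {r : ℝ≥0} (hr : ∀ i j, d i j ≤ r) : VRc d r = ⊤ := by
  ext
  exact ⟨fun h => h.1, fun h => ⟨h, hr _ _, hr _ _⟩⟩

variable [Fintype Z]

lemma kerVR_le_kerP {r s : ℝ≥0} (hrs : r ≤ s) : kerVR d r ≤ kerP d s :=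
  ker_rho_mono (VR_le_VRc d hrs)

lemma kerVR_eq_kerP {r : ℝ≥0} (hr : 0 < r) : kerVR d r = kerP d r := by
  rw [kerVR, kerP, VR_eq_VRc d hr]

lemma kerP_eq_of_gap {c s : ℝ≥0} (hcs : c ≤ s) (hgap : ∀ i j, d i j ≤ s → d i j ≤ c) :
    kerP d c = kerP d s := by
  rw [kerP, kerP, VRc_eq_of_gap d hcs hgap]

lemma kerP_le_kerP_of_forall_le {r : ℝ≥0} (hr : ∀ i j, d i j ≤ r) (d' : Z → Z → ℝ≥0)
    (s : ℝ≥0) : kerP d' s ≤ kerP d r := by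
  rw [kerP, kerP, VRc_eq_top d hr]
  exact ker_rho_mono le_top

lemma kerM_le_kerP (b : ℝ≥0) : kerM d b ≤ kerP d b :=
  iSup_le fun r => kerVR_le_kerP d r.2.le

lemma kerM_zero : kerM d 0 = ⊥ :=
  have : IsEmpty {r : ℝ≥0 // r < 0} := ⟨fun r => not_lt_zero r.2⟩
  iSup_of_empty _

lemma kerM_eq_kerP_of_gap {u t : ℝ≥0} (hut : u < t) (hgap : ∀ i j, d i j < t → d i j ≤ u) :
    kerM d t = kerP d u := by
  have hP : ∀ r, u < r → r < t → kerP d u = kerVR d r := fun r hur hrt => by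
    rw [kerVR_eq_kerP d (pos_of_gt hur)]
    exact kerP_eq_of_gap d hur.le fun i j hij => hgap i j (hij.trans_lt hrt)
  apply le_antisymm
  · refine iSup_le fun ⟨r, hrt⟩ => ?_
    rcases le_or_gt r u with hru | hur
    · exact kerVR_le_kerP d hru
    · exact (hP r hur hrt).ge
  · obtain ⟨r, hur, hrt⟩ := exists_between hut
    rw [hP r hur hrt]
    exact le_iSup (fun r : {r : ℝ≥0 // r < t} => kerVR d r) ⟨r, hrt⟩

noncomputable def criticalValues : Finset ℝ≥0 :=
  insert 0 (Finset.univ.image fun p : Z × Z => d p.1 p.2)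

lemma zero_mem_criticalValues : 0 ∈ criticalValues d := Finset.mem_insert_self _ _

lemma dist_mem_criticalValues (i j : Z) : d i j ∈ criticalValues d :=
  Finset.mem_insert_of_mem (Finset.mem_image.mpr ⟨(i, j), Finset.mem_univ _, rfl⟩)

lemma kerM_eq_kerP_of_not_mem_criticalValues {b : ℝ≥0} (hb : b ∉ criticalValues d) :
    kerM d b = kerP d b := by
  have hb0 : 0 < b := pos_iff_ne_zero.mpr fun h => hb (h ▸ zero_mem_criticalValues d)
  have hne : ((criticalValues d).filter (· < b)).Nonempty :=
    ⟨0, Finset.mem_filter.mpr ⟨zero_mem_criticalValues d, hb0⟩⟩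
  set u := ((criticalValues d).filter (· < b)).max' hne
  have hub : u < b := (Finset.mem_filter.mp (Finset.max'_mem _ hne)).2
  have hgap : ∀ i j, d i j < b → d i j ≤ u := fun i j hij =>
    Finset.le_max' _ _ (Finset.mem_filter.mpr ⟨dist_mem_criticalValues d i j, hij⟩)
  rw [kerM_eq_kerP_of_gap d hub hgap, kerP_eq_of_gap d hub.le fun i j hij =>
    hgap i j (hij.lt_of_ne fun h => hb (h ▸ dist_mem_criticalValues d i j))]

end VietorisRips

variable {Z : Type*} [Fintype Z]

lemma blockFn_add_finrank (dX dZ : Z → Z → ℝ≥0) (a b : ℝ≥0) :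
    blockFn dX dZ a b + finrank (ZMod 2) ↥(kerP dX a ⊓ kerM dZ b ⊔ kerM dX a)
      = finrank (ZMod 2) ↥(kerP dX a ⊓ kerP dZ b ⊔ kerM dX a) :=
  Submodule.finrank_quotient_inf_sup_add_finrank (kerM_le_kerP dX a) (kerM_le_kerP dZ b)

lemma blockFn_comm (dX dZ : Z → Z → ℝ≥0) (a b : ℝ≥0) :
    blockFn dX dZ a b = blockFn dZ dX b a := by
  have hA : kerP dX a ⊓ kerP dZ b = kerP dZ b ⊓ kerP dX a := inf_comm _ _
  have hB : kerM dX a ⊓ kerP dZ b ⊔ kerP dX a ⊓ kerM dZ b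
      = kerM dZ b ⊓ kerP dX a ⊔ kerP dZ b ⊓ kerM dX a := by
    rw [inf_comm (kerM dX a), inf_comm (kerP dX a), sup_comm]
  rw [blockFn, blockFn, hA, hB]

theorem finsum_blockFn_eq_mult (dX dZ : Z → Z → ℝ≥0) (a : ℝ≥0) :
    ∑ᶠ b, blockFn dX dZ a b = mult dX a := by
  set D := criticalValues dZ
  have hD : D.Nonempty := ⟨0, zero_mem_criticalValues dZ⟩
  have hsupp : ∑ᶠ b, blockFn dX dZ a b = ∑ b ∈ D, blockFn dX dZ a b :=
    finsum_eq_sum_of_support_subset _ fun b hb => by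
      by_contra hbD
      have := blockFn_add_finrank dX dZ a b
      rw [kerM_eq_kerP_of_not_mem_criticalValues dZ hbD] at this
      exact hb (by omega)
  have htele := D.sum_add_eq_of_telescoping (h := blockFn dX dZ a)
    (f := fun b => finrank (ZMod 2) ↥(kerP dX a ⊓ kerP dZ b ⊔ kerM dX a))
    (c := finrank (ZMod 2) (kerM dX a))
    (fun t _ htmin => by
      obtain rfl : t = 0 := le_antisymm (htmin 0 (zero_mem_criticalValues dZ)) zero_le
      have h0 := blockFn_add_finrank dX dZ a 0
      rwa [kerM_zero, inf_bot_eq, bot_sup_eq] at h0)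
    (fun t _ u _ hut hpred => by
      rw [← kerM_eq_kerP_of_gap dZ hut fun i j => hpred _ (dist_mem_criticalValues dZ i j)]
      exact blockFn_add_finrank dX dZ a t)
    hD
  have htop : kerP dX a ⊓ kerP dZ (D.max' hD) ⊔ kerM dX a = kerP dX a := by
    rw [inf_eq_left.mpr (kerP_le_kerP_of_forall_le dZ
        (fun i j => D.le_max' _ (dist_mem_criticalValues dZ i j)) dX a),
      sup_eq_left.mpr (kerM_le_kerP dX a)]
  have hmono := Submodule.finrank_mono (kerM_le_kerP dX a)
  rw [hsupp, mult]
  rw [htop] at htele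
  omega

theorem stmt9_general {n : ℕ} (dX dZ : Fin n → Fin n → ℝ≥0) :
    (∀ a : ℝ≥0, ∑ᶠ b : ℝ≥0, blockFn dX dZ a b = mult dX a) ∧
    (∀ b : ℝ≥0, ∑ᶠ a : ℝ≥0, blockFn dX dZ a b = mult dZ b) :=
  ⟨finsum_blockFn_eq_mult dX dZ, fun b => by
    simpa only [blockFn_comm dX dZ _ b] using finsum_blockFn_eq_mult dZ dX b⟩

/-- the marginals of the induced block function are the barcode
multiplicities: `Σ_b M_f(a,b) = m^X(a)` and `Σ_a M_f(a,b) = m^Z(b)`. -/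
theorem stmt9 {n : ℕ} (dX dZ : Fin n → Fin n → ℝ≥0)
    (hsX : ∀ i j, dX i j = dX j i) (hsZ : ∀ i j, dZ i j = dZ j i) :
    (∀ a : ℝ≥0, ∑ᶠ b : ℝ≥0, blockFn dX dZ a b = mult dX a) ∧
    (∀ b : ℝ≥0, ∑ᶠ a : ℝ≥0, blockFn dX dZ a b = mult dZ b) :=
  stmt9_general dX dZ
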